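/- arXiv:2506.15795 — 3 statements merged into one kernel-verified Lean document; each statement's English description precedes it below -/
import Mathlib

section
/- Let F : ℝ³ × ℝ³ → [0,∞) be a probability density on ℝ⁶ such that √F belongs to the Sobolev space H¹(ℝ⁶). Then ∫_{ℝ³}∫_{ℝ³} |v−w|^{−2} F(v,w) dv dw ≤ 2 ∫_{ℝ⁶} |∇√F(v,w)|² dv dw; equivalently, the left-hand side is bounded by one half of the Fisher information ∫_{ℝ⁶} |∇F|²/F. -/
/- For fixed w, Hardy's inequality ∫ |x - c|⁻² g(x)² dx ≤ 4 ∫ |∇g|² on ℝ³, applied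
with c = w to g = √F(·, w), bounds the left-hand side by 4 ∫ |∇_v √F|²; exchanging the roles of
v and w bounds it by 4 ∫ |∇_w √F|², and averaging the two bounds gives the constant 2.
Hardy's inequality follows in polar coordinates from its radial form
(k + 1)² ∫₀^∞ r^k h² ≤ 4 ∫₀^∞ r^(k+2) h'²: integrate (r^(k+1) h²)' over (0, b] and absorb the
cross term 2 r^(k+1) h h' by AM-GM. The boundary term b^(k+1) h(b)² is arbitrarily small for
suitable large b because ∫ r · r^(k+1) h² < ∞, i.e. because g ∈ L². -/

open MeasureTheory Real
open scoped ENNReal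
open Set Metric Module

theorem integrableOn_Ioc_pow_mul_mul_deriv (k : ℕ) {h : ℝ → ℝ} (hh : Differentiable ℝ h) {b : ℝ}
    (hint : IntegrableOn (fun r => r ^ (k + 2) * deriv h r ^ 2) (Ioc 0 b)) :
    IntegrableOn (fun r => r ^ (k + 1) * (h r * deriv h r)) (Ioc 0 b) := by
  have hA : IntegrableOn (fun r => r ^ k * h r ^ 2) (Ioc 0 b) :=
    ((continuous_pow k).mul (hh.continuous.pow 2)).integrableOn_Ioc
  have hmeas : Measurable fun r => r ^ (k + 1) * (h r * deriv h r) := by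
    have := hh.continuous.measurable
    fun_prop
  refine (hA.add hint).mono' hmeas.aestronglyMeasurable
    (ae_restrict_of_forall_mem measurableSet_Ioc fun r hr => ?_)
  have hsq : 0 ≤ r ^ k * (|h r| - r * |deriv h r|) ^ 2 :=
    mul_nonneg (pow_nonneg hr.1.le k) (sq_nonneg _)
  have key : r ^ k * (|h r| - r * |deriv h r|) ^ 2
      = r ^ k * h r ^ 2 + r ^ (k + 2) * deriv h r ^ 2
        - 2 * |r ^ (k + 1) * (h r * deriv h r)| := by
    rw [abs_mul, abs_mul, abs_of_nonneg (pow_nonneg hr.1.le _)]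
    ring_nf
    rw [sq_abs, sq_abs]
  rw [key] at hsq
  rw [Real.norm_eq_abs, Pi.add_apply]
  linarith [abs_nonneg (r ^ (k + 1) * (h r * deriv h r))]

theorem hardy_integral_Ioc (k : ℕ) {h : ℝ → ℝ} (hh : Differentiable ℝ h) {b : ℝ}
    (hb : 0 ≤ b) (hint : IntegrableOn (fun r => r ^ (k + 2) * deriv h r ^ 2) (Ioc 0 b)) :
    (k + 1) ^ 2 * ∫ r in Ioc 0 b, r ^ k * h r ^ 2
      ≤ 2 * (k + 1) * (b ^ (k + 1) * h b ^ 2)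
        + 4 * ∫ r in Ioc 0 b, r ^ (k + 2) * deriv h r ^ 2 := by
  have hA : IntegrableOn (fun r => r ^ k * h r ^ 2) (Ioc 0 b) :=
    ((continuous_pow k).mul (hh.continuous.pow 2)).integrableOn_Ioc
  have hC := integrableOn_Ioc_pow_mul_mul_deriv k hh hint
  have ftc : ∫ r in Ioc 0 b, ((k + 1) * (r ^ k * h r ^ 2) + 2 * (r ^ (k + 1) * (h r * deriv h r)))
      = b ^ (k + 1) * h b ^ 2 := by
    rw [← intervalIntegral.integral_of_le hb,
      intervalIntegral.integral_eq_sub_of_hasDerivAt (f := fun r => r ^ (k + 1) * h r ^ 2)]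
    · simp
    · intro x _
      refine ((hasDerivAt_pow (k + 1) x).fun_mul ((hh x).hasDerivAt.fun_pow 2)).congr_deriv ?_
      simp only [Nat.add_sub_cancel]
      push_cast
      ring
    · exact ((intervalIntegrable_iff_integrableOn_Ioc_of_le hb).2
        ((hA.const_mul _).add (hC.const_mul _)))
  have amgm : ∫ r in Ioc 0 b, -(2 * (k + 1) * (r ^ (k + 1) * (h r * deriv h r)))
      ≤ ∫ r in Ioc 0 b,
          ((k + 1) ^ 2 / 2 * (r ^ k * h r ^ 2) + 2 * (r ^ (k + 2) * deriv h r ^ 2)) := by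
    refine setIntegral_mono_on (hC.const_mul _).neg ((hA.const_mul _).add (hint.const_mul _))
      measurableSet_Ioc fun r hr => ?_
    have hsq : 0 ≤ r ^ k / 2 * ((k + 1) * h r + 2 * r * deriv h r) ^ 2 :=
      mul_nonneg (div_nonneg (pow_nonneg hr.1.le k) zero_le_two) (sq_nonneg _)
    linear_combination hsq
  rw [integral_add (hA.const_mul _) (hC.const_mul _), integral_const_mul, integral_const_mul] at ftc
  rw [integral_neg, integral_const_mul, integral_add (hA.const_mul _) (hint.const_mul _),
    integral_const_mul, integral_const_mul] at amgm
  linear_combination 2 * amgm + 2 * (k + 1) * ftc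

theorem exists_ge_le_of_setLIntegral_Ioi_mul_ne_top {φ : ℝ → ℝ}
    (hφ : ∫⁻ r in Ioi 0, ENNReal.ofReal (r * φ r) ≠ ∞) {ε : ℝ} (hε : 0 < ε) (B : ℝ) :
    ∃ b ≥ B, φ b ≤ ε := by
  by_contra! hlt
  refine hφ (top_le_iff.1 ?_)
  calc ∞ = ∫⁻ _ in Ioi (max B 1), ENNReal.ofReal ε := by simp [hε]
    _ ≤ ∫⁻ r in Ioi (max B 1), ENNReal.ofReal (r * φ r) :=
      setLIntegral_mono' measurableSet_Ioi fun r hr => by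
        have hr1 : 1 ≤ r := (le_max_right B 1).trans hr.le
        have hφr : ε < φ r := hlt r ((le_max_left B 1).trans hr.le)
        exact ENNReal.ofReal_le_ofReal (by nlinarith)
    _ ≤ ∫⁻ r in Ioi 0, ENNReal.ofReal (r * φ r) :=
      lintegral_mono_set (Ioi_subset_Ioi (by positivity))

theorem hardy_setLIntegral_Ioc (k : ℕ) {h : ℝ → ℝ} (hh : Differentiable ℝ h) {b : ℝ}
    (hb : 0 ≤ b)
    (hK : ∫⁻ r in Ioc 0 b, ENNReal.ofReal (r ^ (k + 2) * deriv h r ^ 2) ≠ ∞) :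
    ((k + 1) ^ 2 : ℝ≥0∞) * ∫⁻ r in Ioc 0 b, ENNReal.ofReal (r ^ k * h r ^ 2)
      ≤ ENNReal.ofReal (2 * (k + 1) * (b ^ (k + 1) * h b ^ 2))
        + 4 * ∫⁻ r in Ioc 0 b, ENNReal.ofReal (r ^ (k + 2) * deriv h r ^ 2) := by
  have nonneg (j : ℕ) (f : ℝ → ℝ) :
      ∀ᵐ r ∂volume.restrict (Ioc 0 b), 0 ≤ r ^ j * f r ^ 2 :=
    ae_restrict_of_forall_mem measurableSet_Ioc
      fun r hr => mul_nonneg (pow_nonneg hr.1.le _) (sq_nonneg _)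
  have hint : IntegrableOn (fun r => r ^ (k + 2) * deriv h r ^ 2) (Ioc 0 b) :=
    ⟨(by fun_prop : Measurable _).aestronglyMeasurable,
      (hasFiniteIntegral_iff_ofReal (nonneg _ _)).2 hK.lt_top⟩
  have hA : IntegrableOn (fun r => r ^ k * h r ^ 2) (Ioc 0 b) :=
    ((continuous_pow k).mul (hh.continuous.pow 2)).integrableOn_Ioc
  calc ((k + 1) ^ 2 : ℝ≥0∞) * ∫⁻ r in Ioc 0 b, ENNReal.ofReal (r ^ k * h r ^ 2)
      = ENNReal.ofReal ((k + 1) ^ 2 * ∫ r in Ioc 0 b, r ^ k * h r ^ 2) := by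
        rw [ENNReal.ofReal_mul (by positivity), ofReal_integral_eq_lintegral_ofReal hA (nonneg _ _),
          ENNReal.ofReal_pow (by positivity)]
        norm_cast
    _ ≤ ENNReal.ofReal (2 * (k + 1) * (b ^ (k + 1) * h b ^ 2)
        + 4 * ∫ r in Ioc 0 b, r ^ (k + 2) * deriv h r ^ 2) :=
        ENNReal.ofReal_le_ofReal (hardy_integral_Ioc k hh hb hint)
    _ ≤ _ := by
        refine ENNReal.ofReal_add_le.trans (add_le_add le_rfl (le_of_eq ?_))
        rw [ENNReal.ofReal_mul (by norm_num), ofReal_integral_eq_lintegral_ofReal hint (nonneg _ _)]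
        norm_num

theorem hardy_lintegral_Ioi (k : ℕ) {h : ℝ → ℝ} (hh : Differentiable ℝ h)
    (hM : ∫⁻ r in Ioi 0, ENNReal.ofReal (r ^ (k + 2) * h r ^ 2) ≠ ∞) :
    ((k + 1) ^ 2 : ℝ≥0∞) * ∫⁻ r in Ioi 0, ENNReal.ofReal (r ^ k * h r ^ 2)
      ≤ 4 * ∫⁻ r in Ioi 0, ENNReal.ofReal (r ^ (k + 2) * deriv h r ^ 2) := by
  set K := ∫⁻ r in Ioi 0, ENNReal.ofReal (r ^ (k + 2) * deriv h r ^ 2)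
  rcases eq_or_ne K ∞ with hK | hK
  · simp [hK]
  have hcover : Ioi (0 : ℝ) = ⋃ n : ℕ, Ioc 0 (n : ℝ) :=
    (iUnion_Ioc_eq_Ioi_self_iff.2 fun x _ => exists_nat_ge x).symm
  have hdir : Directed (· ⊆ ·) fun n : ℕ => Ioc (0 : ℝ) n :=
    Monotone.directed_le fun m n hmn => Ioc_subset_Ioc_right (by exact_mod_cast hmn)
  rw [hcover, setLIntegral_iUnion_of_directed _ hdir, ENNReal.mul_iSup]
  refine iSup_le fun n => ENNReal.le_of_forall_pos_le_add fun ε hε _ => ?_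
  have hk : (0 : ℝ) < 2 * (k + 1) := by positivity
  obtain ⟨b, hnb, hb⟩ := exists_ge_le_of_setLIntegral_Ioi_mul_ne_top
    (φ := fun r => r ^ (k + 1) * h r ^ 2) (by simpa only [← mul_assoc, ← pow_succ'] using hM)
    (div_pos (NNReal.coe_pos.2 hε) hk) n
  have hKb : ∫⁻ r in Ioc 0 b, ENNReal.ofReal (r ^ (k + 2) * deriv h r ^ 2) ≤ K :=
    lintegral_mono_set Ioc_subset_Ioi_self
  calc ((k + 1) ^ 2 : ℝ≥0∞) * ∫⁻ r in Ioc 0 (n : ℝ), ENNReal.ofReal (r ^ k * h r ^ 2)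
      ≤ ((k + 1) ^ 2 : ℝ≥0∞) * ∫⁻ r in Ioc 0 b, ENNReal.ofReal (r ^ k * h r ^ 2) := by
        gcongr
    _ ≤ ENNReal.ofReal (2 * (k + 1) * (b ^ (k + 1) * h b ^ 2))
        + 4 * ∫⁻ r in Ioc 0 b, ENNReal.ofReal (r ^ (k + 2) * deriv h r ^ 2) :=
        hardy_setLIntegral_Ioc k hh ((Nat.cast_nonneg n).trans hnb) (ne_top_of_le_ne_top hK hKb)
    _ ≤ ε + 4 * K := by
        gcongr
        rw [← ENNReal.ofReal_coe_nnreal]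
        refine ENNReal.ofReal_le_ofReal ?_
        rwa [le_div_iff₀ hk, mul_comm] at hb
    _ = 4 * K + ε := add_comm _ _

theorem abs_deriv_comp_smul_le {F : Type*} [NormedAddCommGroup F] [NormedSpace ℝ F] {g : F → ℝ}
    (v : F) {r : ℝ} (hg : DifferentiableAt ℝ g (r • v)) :
    |deriv (fun t : ℝ => g (t • v)) r| ≤ ‖fderiv ℝ g (r • v)‖ * ‖v‖ := by
  have h := hg.hasFDerivAt.comp_hasDerivAt r ((hasDerivAt_id' r).smul_const v)
  rw [one_smul] at h
  have hd : deriv (fun t : ℝ => g (t • v)) r = fderiv ℝ g (r • v) v := h.deriv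
  rw [hd, ← Real.norm_eq_abs]
  exact (fderiv ℝ g (r • v)).le_opNorm v

theorem hardy_lintegral_ray {F : Type*} [NormedAddCommGroup F] [NormedSpace ℝ F] (k : ℕ)
    {g : F → ℝ} (hg : Differentiable ℝ g) {ω : F} (hω : ‖ω‖ = 1)
    (hfin : ∫⁻ r in Ioi 0, ENNReal.ofReal (r ^ (k + 2) * g (r • ω) ^ 2) ≠ ∞) :
    ((k + 1) ^ 2 : ℝ≥0∞) * ∫⁻ r in Ioi 0,
        ENNReal.ofReal (r ^ (k + 2)) * ENNReal.ofReal ((‖r • ω‖ ^ 2)⁻¹ * g (r • ω) ^ 2)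
      ≤ 4 * ∫⁻ r in Ioi 0,
        ENNReal.ofReal (r ^ (k + 2)) * ENNReal.ofReal (‖fderiv ℝ g (r • ω)‖ ^ 2) := by
  calc ((k + 1) ^ 2 : ℝ≥0∞) * ∫⁻ r in Ioi 0,
        ENNReal.ofReal (r ^ (k + 2)) * ENNReal.ofReal ((‖r • ω‖ ^ 2)⁻¹ * g (r • ω) ^ 2)
      = ((k + 1) ^ 2 : ℝ≥0∞) * ∫⁻ r in Ioi 0, ENNReal.ofReal (r ^ k * g (r • ω) ^ 2) := by
        refine congrArg _ (setLIntegral_congr_fun measurableSet_Ioi fun r (hr : 0 < r) => ?_)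
        rw [norm_smul, hω, mul_one, Real.norm_of_nonneg hr.le,
          ← ENNReal.ofReal_mul (pow_nonneg hr.le _)]
        congr 1
        field_simp
        ring
    _ ≤ 4 * ∫⁻ r in Ioi 0, ENNReal.ofReal (r ^ (k + 2) * deriv (fun r => g (r • ω)) r ^ 2) :=
        hardy_lintegral_Ioi k (hg.comp (differentiable_id.smul_const ω)) hfin
    _ ≤ _ := by
        refine mul_le_mul_right (setLIntegral_mono' measurableSet_Ioi fun r (hr : 0 < r) => ?_) 4
        have hr0 : 0 ≤ r ^ (k + 2) := pow_nonneg hr.le _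
        rw [← ENNReal.ofReal_mul hr0]
        refine ENNReal.ofReal_le_ofReal (mul_le_mul_of_nonneg_left ?_ hr0)
        rw [← sq_abs]
        gcongr
        simpa [hω] using abs_deriv_comp_smul_le ω (hg (r • ω))

section Hardy

variable {E : Type*} [NormedAddCommGroup E] [InnerProductSpace ℝ E] [FiniteDimensional ℝ E]
  [MeasurableSpace E] [BorelSpace E] (μ : Measure E) [μ.IsAddHaarMeasure]

theorem lintegral_eq_lintegral_toSphere_lintegral_Ioi [Nontrivial E] {f : E → ℝ≥0∞}
    (hf : Measurable f) :
    ∫⁻ x, f x ∂μ = ∫⁻ ω : sphere (0 : E) 1, (∫⁻ r in Ioi (0 : ℝ),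
      ENNReal.ofReal (r ^ (finrank ℝ E - 1)) * f (r • (ω : E))) ∂μ.toSphere := by
  set e := homeomorphUnitSphereProd E
  have hfe : Measurable fun p => f (e.symm p) := hf.comp (by fun_prop)
  calc ∫⁻ x, f x ∂μ = ∫⁻ x : ({0}ᶜ : Set E), f (e.symm (e x)) ∂μ.comap (↑) := by
        simp_rw [e.symm_apply_apply]
        rw [lintegral_subtype_comap (measurableSet_singleton 0).compl, restrict_compl_singleton]
    _ = ∫⁻ p, f (e.symm p) ∂μ.toSphere.prod (Measure.volumeIoiPow (finrank ℝ E - 1)) :=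
        μ.measurePreserving_homeomorphUnitSphereProd.lintegral_comp_emb e.measurableEmbedding
          (fun p => f (e.symm p))
    _ = _ := by
        rw [lintegral_prod _ hfe.aemeasurable]
        refine lintegral_congr fun ω => ?_
        have hω : Measurable fun r => f (e.symm (ω, r)) := hfe.comp measurable_prodMk_left
        rw [Measure.volumeIoiPow, lintegral_withDensity_eq_lintegral_mul _ (by fun_prop) hω,
          ← lintegral_subtype_comap measurableSet_Ioi]
        rfl

theorem hardy_lintegral (hE : 3 ≤ finrank ℝ E) {g : E → ℝ} (hg : Differentiable ℝ g)
    (hg2 : ∫⁻ x, ENNReal.ofReal (g x ^ 2) ∂μ ≠ ∞) :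
    ((finrank ℝ E - 2 : ℕ) : ℝ≥0∞) ^ 2 *
        ∫⁻ x, ENNReal.ofReal ((‖x‖ ^ 2)⁻¹ * g x ^ 2) ∂μ
      ≤ 4 * ∫⁻ x, ENNReal.ofReal (‖fderiv ℝ g x‖ ^ 2) ∂μ := by
  obtain ⟨k, hk⟩ : ∃ k, finrank ℝ E = k + 3 := ⟨finrank ℝ E - 3, by omega⟩
  have : Nontrivial E := Module.nontrivial_of_finrank_pos (R := ℝ) (by omega)
  have : Continuous g := hg.continuous
  have hn : finrank ℝ E - 1 = k + 2 := by omega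
  have hfin : ∀ᵐ ω : sphere (0 : E) 1 ∂μ.toSphere,
      ∫⁻ r in Ioi 0, ENNReal.ofReal (r ^ (k + 2) * g (r • (ω : E)) ^ 2) ≠ ∞ := by
    rw [lintegral_eq_lintegral_toSphere_lintegral_Ioi μ (by fun_prop), hn] at hg2
    simp_rw [← ENNReal.ofReal_mul' (sq_nonneg _)] at hg2
    have hmeas : Measurable fun p : sphere (0 : E) 1 × ℝ =>
        ENNReal.ofReal (p.2 ^ (k + 2) * g (p.2 • (p.1 : E)) ^ 2) := by fun_prop
    exact (ae_lt_top' hmeas.lintegral_prod_right'.aemeasurable hg2).mono fun ω hω => hω.ne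
  rw [lintegral_eq_lintegral_toSphere_lintegral_Ioi μ (by fun_prop),
    lintegral_eq_lintegral_toSphere_lintegral_Ioi μ (by fun_prop), hn,
    ← lintegral_const_mul' _ _ (by simp), ← lintegral_const_mul' _ _ (by simp)]
  refine lintegral_mono_ae (hfin.mono fun ω hω => ?_)
  rw [show finrank ℝ E - 2 = k + 1 by omega]
  push_cast
  exact hardy_lintegral_ray k hg (norm_eq_of_mem_sphere ω) hω

theorem hardy_lintegral_sub (hE : 3 ≤ finrank ℝ E) {g : E → ℝ} (hg : Differentiable ℝ g)
    (hg2 : ∫⁻ x, ENNReal.ofReal (g x ^ 2) ∂μ ≠ ∞) (c : E) :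
    ((finrank ℝ E - 2 : ℕ) : ℝ≥0∞) ^ 2 *
        ∫⁻ x, ENNReal.ofReal ((‖x - c‖ ^ 2)⁻¹ * g x ^ 2) ∂μ
      ≤ 4 * ∫⁻ x, ENNReal.ofReal (‖fderiv ℝ g x‖ ^ 2) ∂μ := by
  have h := hardy_lintegral μ hE (g := fun x => g (x + c))
    (hg.comp (differentiable_id.add_const c))
    (by rwa [lintegral_add_right_eq_self (fun x => ENNReal.ofReal (g x ^ 2))])
  simp only [fderiv_comp_add_right] at h
  rw [← lintegral_add_right_eq_self
      (fun x => ENNReal.ofReal ((‖x - c‖ ^ 2)⁻¹ * g x ^ 2)) c,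
    ← lintegral_add_right_eq_self (fun x => ENNReal.ofReal (‖fderiv ℝ g x‖ ^ 2)) c]
  simpa only [add_sub_cancel_right] using h

theorem hardy_lintegral_prod_snd {ν : Measure E} [SFinite ν] (hE : 3 ≤ finrank ℝ E)
    {G : E × E → ℝ}
    (hG : Continuous G) (hGd : ∀ v, Differentiable ℝ fun w => G (v, w))
    (hG2 : ∫⁻ p, ENNReal.ofReal (G p ^ 2) ∂ν.prod μ ≠ ∞) :
    ((finrank ℝ E - 2 : ℕ) : ℝ≥0∞) ^ 2 *
        ∫⁻ p, ENNReal.ofReal ((‖p.1 - p.2‖ ^ 2)⁻¹ * G p ^ 2) ∂ν.prod μ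
      ≤ 4 * ∫⁻ p, ENNReal.ofReal (‖fderiv ℝ (fun w => G (p.1, w)) p.2‖ ^ 2) ∂ν.prod μ := by
  borelize (E →L[ℝ] ℝ)
  have hD : Measurable fun p : E × E => fderiv ℝ (fun w => G (p.1, w)) p.2 :=
    measurable_fderiv_with_param ℝ (f := fun v w => G (v, w)) hG
  rw [lintegral_prod _ (by fun_prop)] at hG2
  rw [lintegral_prod _ (by fun_prop),
    lintegral_prod _ (hD.norm.pow_const 2).ennreal_ofReal.aemeasurable,
    ← lintegral_const_mul' _ _ (by simp), ← lintegral_const_mul' _ _ (by simp)]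
  have hmeas : Measurable fun p : E × E => ENNReal.ofReal (G p ^ 2) := by fun_prop
  refine lintegral_mono_ae ((ae_lt_top' hmeas.lintegral_prod_right'.aemeasurable hG2).mono
    fun v hv => ?_)
  simpa only [norm_sub_rev v] using hardy_lintegral_sub μ hE (hGd v) hv.ne v

theorem hardy_lintegral_prod_fst {ν : Measure E} [SFinite ν] (hE : 3 ≤ finrank ℝ E)
    {G : E × E → ℝ}
    (hG : Continuous G) (hGd : ∀ w, Differentiable ℝ fun v => G (v, w))
    (hG2 : ∫⁻ p, ENNReal.ofReal (G p ^ 2) ∂μ.prod ν ≠ ∞) :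
    ((finrank ℝ E - 2 : ℕ) : ℝ≥0∞) ^ 2 *
        ∫⁻ p, ENNReal.ofReal ((‖p.1 - p.2‖ ^ 2)⁻¹ * G p ^ 2) ∂μ.prod ν
      ≤ 4 * ∫⁻ p, ENNReal.ofReal (‖fderiv ℝ (fun v => G (v, p.2)) p.1‖ ^ 2) ∂μ.prod ν := by
  have h := hardy_lintegral_prod_snd μ hE (ν := ν) (G := fun p => G p.swap)
    (hG.comp continuous_swap) hGd (by rwa [lintegral_prod_swap (fun p => ENNReal.ofReal (G p ^ 2))])
  rw [← lintegral_prod_swap, ← lintegral_prod_swap (fun p =>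
    ENNReal.ofReal (‖fderiv ℝ (fun v => G (v, p.2)) p.1‖ ^ 2))]
  simpa only [Prod.fst_swap, Prod.snd_swap, Prod.swap_prod_mk, norm_sub_rev] using h

end Hardy

theorem le_two_mul_add_of_le_four_mul {a x y : ℝ≥0∞} (hx : a ≤ 4 * x) (hy : a ≤ 4 * y) :
    a ≤ 2 * (x + y) := by
  refine (ENNReal.mul_le_mul_iff_right two_ne_zero ENNReal.ofNat_ne_top).1 ?_
  calc 2 * a = a + a := two_mul a
    _ ≤ 4 * x + 4 * y := add_le_add hx hy
    _ = 2 * (2 * (x + y)) := by ring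

theorem norm_gradient {F : Type*} [NormedAddCommGroup F] [InnerProductSpace ℝ F] [CompleteSpace F]
    (f : F → ℝ) (x : F) : ‖gradient f x‖ = ‖fderiv ℝ f x‖ :=
  (InnerProductSpace.toDual ℝ F).symm.norm_map _

theorem stmt0_general
    (F : EuclideanSpace ℝ (Fin 3) × EuclideanSpace ℝ (Fin 3) → ℝ)
    (hF_nonneg : ∀ p, 0 ≤ F p)
    (hF_prob : ∫⁻ p, ENNReal.ofReal (F p) = 1)
    (hsqrt_diff : Differentiable ℝ (fun p => Real.sqrt (F p))) :
    ∫⁻ p : EuclideanSpace ℝ (Fin 3) × EuclideanSpace ℝ (Fin 3),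
        ENNReal.ofReal ((‖p.1 - p.2‖ ^ 2)⁻¹ * F p)
      ≤ 2 * ∫⁻ p : EuclideanSpace ℝ (Fin 3) × EuclideanSpace ℝ (Fin 3),
        ENNReal.ofReal
          (‖gradient (fun v => Real.sqrt (F (v, p.2))) p.1‖ ^ 2 +
           ‖gradient (fun w => Real.sqrt (F (p.1, w))) p.2‖ ^ 2) := by
  have hF (p) : Real.sqrt (F p) ^ 2 = F p := sq_sqrt (hF_nonneg p)
  have hdim : 3 ≤ finrank ℝ (EuclideanSpace ℝ (Fin 3)) := by simp
  have hF2 : ∫⁻ p, ENNReal.ofReal (Real.sqrt (F p) ^ 2) ∂volume.prod volume ≠ ∞ := by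
    simp_rw [hF]
    rw [← Measure.volume_eq_prod, hF_prob]
    exact ENNReal.one_ne_top
  have hv := hardy_lintegral_prod_fst volume hdim (ν := volume) hsqrt_diff.continuous
    (fun w => hsqrt_diff.comp (by fun_prop)) hF2
  have hw := hardy_lintegral_prod_snd volume hdim (ν := volume) hsqrt_diff.continuous
    (fun v => hsqrt_diff.comp (by fun_prop)) hF2
  simp only [finrank_euclideanSpace_fin, Nat.reduceSub, Nat.cast_one, one_pow, one_mul, hF,
    ← Measure.volume_eq_prod] at hv hw
  simp only [norm_gradient]
  calc _ ≤ 2 * (_ + _) := le_two_mul_add_of_le_four_mul hv hw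
    _ ≤ _ := by
      gcongr
      refine (le_lintegral_add _ _).trans_eq (lintegral_congr fun p => ?_)
      exact (ENNReal.ofReal_add (sq_nonneg _) (sq_nonneg _)).symm

theorem stmt0
    (F : EuclideanSpace ℝ (Fin 3) × EuclideanSpace ℝ (Fin 3) → ℝ)
    (hF_nonneg : ∀ p, 0 ≤ F p)
    (hF_meas : Measurable F)
    (hF_prob : ∫⁻ p, ENNReal.ofReal (F p) = 1)
    (hsqrt_diff : Differentiable ℝ (fun p => Real.sqrt (F p))) :
    ∫⁻ p : EuclideanSpace ℝ (Fin 3) × EuclideanSpace ℝ (Fin 3),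
        ENNReal.ofReal ((‖p.1 - p.2‖ ^ 2)⁻¹ * F p)
      ≤ 2 * ∫⁻ p : EuclideanSpace ℝ (Fin 3) × EuclideanSpace ℝ (Fin 3),
        ENNReal.ofReal
          (‖gradient (fun v => Real.sqrt (F (v, p.2))) p.1‖ ^ 2 +
           ‖gradient (fun w => Real.sqrt (F (p.1, w))) p.2‖ ^ 2) :=
  stmt0_general F hF_nonneg hF_prob hsqrt_diff
end

section
/- Let δ > 0, R > 0, and let v₁, v₂, v₃ ∈ B(0,R) ⊂ ℝ³ be δ-non-aligned. Let v ∈ ℝ³ and let ξ ∈ ℝ³ be a unit vector, and define the double-sided cone C := { w ∈ ℝ³ : |p_{ξ^⊥}(v−w)| ≤ δ |v−w| / (2 + R + |v|) }. Then there exists k ∈ {1,2,3} such that C does not intersect the ball B(v_k, 2δ). -/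
/-!
If the cone met all three balls `B(vₖ, 2δ)`, every `vₖ` would lie within `3δ` of the axis
`v + ℝξ` (the cone has aperture `δ / (2 + R + ‖v‖)`, and the relevant part of it has length at most
`2 + R + ‖v‖`). Writing `v₂ − v₁ = sξ + f` and `v₃ − v₁ = rξ + g` with `‖f‖, ‖g‖ ≤ 6δ`, the
projection of `s(v₃ − v₁)` orthogonally to `v₂ − v₁` is that of `sg − rf`, so it is small, while
non-alignment forces `|s| ≥ 3√δ` and that projection to be large.
-/

open MeasureTheory Real Set Metric
open scoped RealInnerProductSpace

noncomputable section

/-- Orthogonal projection onto the plane orthogonal to `u`. -/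
def projPerp (u x : EuclideanSpace ℝ (Fin 3)) : EuclideanSpace ℝ (Fin 3) :=
  (Submodule.orthogonalProjectionOnto (Submodule.span ℝ {u})ᗮ x : EuclideanSpace ℝ (Fin 3))

/-- Three points of ℝ³ are δ-non-aligned if `|v₂−v₁| ≥ 6√δ` and
`|p_{(v₂−v₁)^⊥}(v₃−v₁)| ≥ 24δ + 2√δ|v₃−v₁|`. -/
def DeltaNonAligned (δ : ℝ) (v₁ v₂ v₃ : EuclideanSpace ℝ (Fin 3)) : Prop :=
  6 * Real.sqrt δ ≤ ‖v₂ - v₁‖ ∧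
  24 * δ + 2 * Real.sqrt δ * ‖v₃ - v₁‖ ≤ ‖projPerp (v₂ - v₁) (v₃ - v₁)‖

section projPerp

variable (u x : EuclideanSpace ℝ (Fin 3))

lemma projPerp_eq_starProjection : projPerp u x = (ℝ ∙ u)ᗮ.starProjection x := rfl

lemma norm_projPerp_le : ‖projPerp u x‖ ≤ ‖x‖ :=
  Submodule.norm_starProjection_apply_le _ x

lemma projPerp_smul (c : ℝ) : projPerp u (c • x) = c • projPerp u x := by
  simp only [projPerp_eq_starProjection, map_smul]

lemma projPerp_sub_smul_self (c : ℝ) : projPerp u (x - c • u) = projPerp u x := by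
  simp only [projPerp_eq_starProjection, map_sub, map_smul,
    Submodule.starProjection_orthogonalComplement_singleton_eq_zero, smul_zero, sub_zero]

lemma exists_sub_projPerp_eq_smul : ∃ c : ℝ, x - projPerp u x = c • u := by
  rw [projPerp_eq_starProjection, Submodule.starProjection_orthogonal_val, sub_sub_cancel]
  obtain ⟨c, hc⟩ := Submodule.mem_span_singleton.mp ((ℝ ∙ u).starProjection_apply_mem x)
  exact ⟨c, hc.symm⟩

end projPerp

lemma abs_mul_norm_projPerp_le (u x ξ : EuclideanSpace ℝ (Fin 3)) (s r : ℝ) :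
    |s| * ‖projPerp u x‖ ≤ |s| * ‖x - r • ξ‖ + |r| * ‖u - s • ξ‖ := by
  have hcomb : s • x - r • u = s • (x - r • ξ) - r • (u - s • ξ) := by
    simp only [smul_sub, smul_smul, mul_comm s r]
    abel
  calc |s| * ‖projPerp u x‖ = ‖projPerp u (s • x - r • u)‖ := by
        rw [projPerp_sub_smul_self, projPerp_smul, norm_smul, Real.norm_eq_abs]
    _ ≤ ‖s • (x - r • ξ) - r • (u - s • ξ)‖ := by rw [← hcomb]; exact norm_projPerp_le u _
    _ ≤ |s| * ‖x - r • ξ‖ + |r| * ‖u - s • ξ‖ := by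
        simpa only [norm_smul, Real.norm_eq_abs] using norm_sub_le (s • (x - r • ξ)) (r • (u - s • ξ))

lemma DeltaNonAligned.sqrt_le_half {δ : ℝ} {v₁ v₂ v₃ : EuclideanSpace ℝ (Fin 3)}
    (hna : DeltaNonAligned δ v₁ v₂ v₃) (hδ : 0 < δ) : √δ ≤ 1 / 2 := by
  have h := hna.2.trans (norm_projPerp_le _ _)
  nlinarith [norm_nonneg (v₃ - v₁)]

lemma not_deltaNonAligned_of_near_line {δ : ℝ} (hδ : 0 < δ)
    {v v₁ v₂ v₃ ξ : EuclideanSpace ℝ (Fin 3)} (hξ : ‖ξ‖ = 1) {c₁ c₂ c₃ : ℝ}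
    (h₁ : ‖v - v₁ - c₁ • ξ‖ ≤ 3 * δ) (h₂ : ‖v - v₂ - c₂ • ξ‖ ≤ 3 * δ)
    (h₃ : ‖v - v₃ - c₃ • ξ‖ ≤ 3 * δ) : ¬ DeltaNonAligned δ v₁ v₂ v₃ := by
  intro hna
  have hσ := hna.sqrt_le_half hδ
  have hσpos : 0 < √δ := Real.sqrt_pos.mpr hδ
  have hσsq : √δ ^ 2 = δ := Real.sq_sqrt hδ.le
  set s := c₁ - c₂
  set r := c₁ - c₃
  have hf : ‖v₂ - v₁ - s • ξ‖ ≤ 6 * δ := by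
    have : v₂ - v₁ - s • ξ = (v - v₁ - c₁ • ξ) - (v - v₂ - c₂ • ξ) := by
      simp only [s, sub_smul]; abel
    linarith [this ▸ norm_sub_le (v - v₁ - c₁ • ξ) (v - v₂ - c₂ • ξ)]
  have hg : ‖v₃ - v₁ - r • ξ‖ ≤ 6 * δ := by
    have : v₃ - v₁ - r • ξ = (v - v₁ - c₁ • ξ) - (v - v₃ - c₃ • ξ) := by
      simp only [r, sub_smul]; abel
    linarith [this ▸ norm_sub_le (v - v₁ - c₁ • ξ) (v - v₃ - c₃ • ξ)]
  have hnorm_smul (a : ℝ) : ‖a • ξ‖ = |a| := by rw [norm_smul, hξ, Real.norm_eq_abs, mul_one]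
  have hs : 3 * √δ ≤ |s| := by
    have := norm_sub_norm_le (v₂ - v₁) (s • ξ)
    nlinarith [hna.1, hnorm_smul s]
  have hr : |r| ≤ ‖v₃ - v₁‖ + 6 * δ := by
    linarith [norm_sub_norm_le (r • ξ) (v₃ - v₁), norm_sub_rev (r • ξ) (v₃ - v₁), hnorm_smul r]
  have hkey := abs_mul_norm_projPerp_le (v₂ - v₁) (v₃ - v₁) ξ s r
  -- `|s| (24δ + 2√δ N) ≤ |s| P ≤ 6δ |s| + 6δ (N + 6δ)` with `N = ‖v₃ − v₁‖`, and `|s| ≥ 3√δ`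
  have hbound : 3 * √δ * (18 * δ + 2 * √δ * ‖v₃ - v₁‖) ≤ 6 * δ * (‖v₃ - v₁‖ + 6 * δ) := by
    have hsP : |s| * (18 * δ + 2 * √δ * ‖v₃ - v₁‖) ≤ 6 * δ * |r| := by
      nlinarith [hna.2, abs_nonneg s, abs_nonneg r]
    calc 3 * √δ * (18 * δ + 2 * √δ * ‖v₃ - v₁‖)
        ≤ |s| * (18 * δ + 2 * √δ * ‖v₃ - v₁‖) := by gcongr
      _ ≤ 6 * δ * |r| := hsP
      _ ≤ 6 * δ * (‖v₃ - v₁‖ + 6 * δ) := by gcongr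
  have hcube : 54 * √δ * δ ≤ 36 * δ ^ 2 := by
    nlinarith [congrArg (· * ‖v₃ - v₁‖) hσsq]
  have : 54 * √δ ≤ 36 * δ := le_of_mul_le_mul_right (by nlinarith) hδ
  nlinarith

lemma exists_norm_sub_sub_smul_le_of_mem_cone {δ R : ℝ} (hδ : 0 ≤ δ) (hδ₁ : δ ≤ 1)
    {v ξ p w : EuclideanSpace ℝ (Fin 3)} (hp : ‖p‖ < R) (hwp : ‖w - p‖ < 2 * δ)
    (hw : ‖projPerp ξ (v - w)‖ ≤ δ * ‖v - w‖ / (2 + R + ‖v‖)) :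
    ∃ c : ℝ, ‖v - p - c • ξ‖ ≤ 3 * δ := by
  obtain ⟨c, hc⟩ := exists_sub_projPerp_eq_smul ξ (v - w)
  refine ⟨c, ?_⟩
  have hvw : ‖v - w‖ ≤ 2 + R + ‖v‖ := by
    have := norm_sub_le_norm_sub_add_norm_sub v p w
    have := norm_sub_le v p
    rw [norm_sub_rev] at hwp
    linarith
  have hproj : ‖projPerp ξ (v - w)‖ ≤ δ := by
    refine hw.trans ((div_le_iff₀ (by linarith [norm_nonneg p, norm_nonneg v])).mpr ?_)
    exact mul_le_mul_of_nonneg_left hvw hδ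
  have hdecomp : v - p - c • ξ = projPerp ξ (v - w) + (w - p) := by
    rw [← hc]; abel
  rw [hdecomp]
  linarith [norm_add_le (projPerp ξ (v - w)) (w - p)]

theorem stmt3_general (δ R : ℝ) (hδ : 0 < δ)
    (v₁ v₂ v₃ : EuclideanSpace ℝ (Fin 3))
    (h₁ : v₁ ∈ Metric.ball (0 : EuclideanSpace ℝ (Fin 3)) R)
    (h₂ : v₂ ∈ Metric.ball (0 : EuclideanSpace ℝ (Fin 3)) R)
    (h₃ : v₃ ∈ Metric.ball (0 : EuclideanSpace ℝ (Fin 3)) R)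
    (hna : DeltaNonAligned δ v₁ v₂ v₃)
    (v ξ : EuclideanSpace ℝ (Fin 3)) (hξ : ‖ξ‖ = 1) :
    ∃ k : Fin 3,
      ∀ w ∈ {w : EuclideanSpace ℝ (Fin 3) |
          ‖projPerp ξ (v - w)‖ ≤ δ * ‖v - w‖ / (2 + R + ‖v‖)},
        w ∉ Metric.ball (![v₁, v₂, v₃] k) (2 * δ) := by
  by_contra! hmeet
  have hδ₁ : δ ≤ 1 := by
    have := hna.sqrt_le_half hδ
    nlinarith [Real.sq_sqrt hδ.le, Real.sqrt_nonneg δ]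
  have near_axis (k : Fin 3) (hk : ‖![v₁, v₂, v₃] k‖ < R) :
      ∃ c : ℝ, ‖v - ![v₁, v₂, v₃] k - c • ξ‖ ≤ 3 * δ := by
    obtain ⟨w, hw, hwk⟩ := hmeet k
    exact exists_norm_sub_sub_smul_le_of_mem_cone hδ.le hδ₁ hk (mem_ball_iff_norm.mp hwk) hw
  obtain ⟨c₁, hc₁⟩ := near_axis 0 (mem_ball_zero_iff.mp h₁)
  obtain ⟨c₂, hc₂⟩ := near_axis 1 (mem_ball_zero_iff.mp h₂)
  obtain ⟨c₃, hc₃⟩ := near_axis 2 (mem_ball_zero_iff.mp h₃)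
  exact not_deltaNonAligned_of_near_line hδ hξ hc₁ hc₂ hc₃ hna

theorem stmt3 (δ R : ℝ) (hδ : 0 < δ) (hR : 0 < R)
    (v₁ v₂ v₃ : EuclideanSpace ℝ (Fin 3))
    (h₁ : v₁ ∈ Metric.ball (0 : EuclideanSpace ℝ (Fin 3)) R)
    (h₂ : v₂ ∈ Metric.ball (0 : EuclideanSpace ℝ (Fin 3)) R)
    (h₃ : v₃ ∈ Metric.ball (0 : EuclideanSpace ℝ (Fin 3)) R)
    (hna : DeltaNonAligned δ v₁ v₂ v₃)
    (v ξ : EuclideanSpace ℝ (Fin 3)) (hξ : ‖ξ‖ = 1) :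
    ∃ k : Fin 3,
      ∀ w ∈ {w : EuclideanSpace ℝ (Fin 3) |
          ‖projPerp ξ (v - w)‖ ≤ δ * ‖v - w‖ / (2 + R + ‖v‖)},
        w ∉ Metric.ball (![v₁, v₂, v₃] k) (2 * δ) :=
  stmt3_general δ R hδ v₁ v₂ v₃ h₁ h₂ h₃ hna v ξ hξ

end
end

section
/- Let d ≥ 1, let g : ℝ^d → ℂ be Lipschitz, let ω : ℝ^d → [0,∞) and b : ℝ^d → ℝ^d be Borel measurable. Then |g| is Lipschitz, both g and |g| are differentiable almost everywhere, at almost every point x one has |D|g|(x)[b(x)]| ≤ |Dg(x)[b(x)]|, and consequently ∫_{ℝ^d} ω(x) |Dg(x)[b(x)]|² dx ≥ ∫_{ℝ^d} ω(x) |D|g|(x)[b(x)]|² dx (the integrals taken in [0,∞], the integrands defined a.e. via the a.e.-existing derivatives). -/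
/-!
Along the line through `x` in direction `v`, the reverse triangle inequality
`|‖g y‖ - ‖g x‖| ≤ ‖g y - g x‖` bounds the difference quotients of `‖g‖` by those of `g`;
at points where both are differentiable (almost all, by Rademacher) the bound passes to the
directional derivatives, and the integral inequality follows by monotonicity.
-/

open MeasureTheory Filter Topology

section DerivComparison

variable {F G : Type*} [NormedAddCommGroup F] [NormedSpace ℝ F]
  [NormedAddCommGroup G] [NormedSpace ℝ G]

theorem HasDerivAt.norm_le_of_norm_sub_le {φ : ℝ → F} {ψ : ℝ → G} {a : F} {b : G} {t₀ : ℝ}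
    (hφ : HasDerivAt φ a t₀) (hψ : HasDerivAt ψ b t₀)
    (h : ∀ᶠ t in 𝓝 t₀, ‖φ t - φ t₀‖ ≤ ‖ψ t - ψ t₀‖) : ‖a‖ ≤ ‖b‖ := by
  rw [hasDerivAt_iff_tendsto_slope] at hφ hψ
  refine le_of_tendsto_of_tendsto hφ.norm hψ.norm ?_
  filter_upwards [nhdsWithin_le_nhds h] with t ht
  simp only [slope, vsub_eq_sub, norm_smul]
  gcongr

variable {E : Type*} [NormedAddCommGroup E] [NormedSpace ℝ E]

theorem HasFDerivAt.norm_apply_le_of_norm_sub_le {f : E → F} {g : E → G}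
    {f' : E →L[ℝ] F} {g' : E →L[ℝ] G} {x : E}
    (hf : HasFDerivAt f f' x) (hg : HasFDerivAt g g' x)
    (h : ∀ᶠ y in 𝓝 x, ‖f y - f x‖ ≤ ‖g y - g x‖) (v : E) : ‖f' v‖ ≤ ‖g' v‖ := by
  have hline : HasDerivAt (fun t : ℝ => x + t • v) v 0 := by
    simpa using ((hasDerivAt_id (0 : ℝ)).smul_const v).const_add x
  have hline_cont : Tendsto (fun t : ℝ => x + t • v) (𝓝 0) (𝓝 x) := by
    simpa using hline.continuousAt.tendsto
  have hf0 : HasFDerivAt f f' (x + (0 : ℝ) • v) := by simpa using hf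
  have hg0 : HasFDerivAt g g' (x + (0 : ℝ) • v) := by simpa using hg
  refine (hf0.comp_hasDerivAt 0 hline).norm_le_of_norm_sub_le (hg0.comp_hasDerivAt 0 hline) ?_
  simpa using hline_cont.eventually h

theorem abs_fderiv_norm_apply_le {f : E → F} {x : E} (hf : DifferentiableAt ℝ f x)
    (hnf : DifferentiableAt ℝ (fun y => ‖f y‖) x) (v : E) :
    |fderiv ℝ (fun y => ‖f y‖) x v| ≤ ‖fderiv ℝ f x v‖ := by
  rw [← Real.norm_eq_abs]
  refine hnf.hasFDerivAt.norm_apply_le_of_norm_sub_le hf.hasFDerivAt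
    (Eventually.of_forall fun y => ?_) v
  rw [Real.norm_eq_abs]
  exact abs_norm_sub_norm_le _ _

end DerivComparison

theorem stmt8_general {d : ℕ}
    (K : NNReal) (g : EuclideanSpace ℝ (Fin d) → ℂ) (hg : LipschitzWith K g)
    (ω : EuclideanSpace ℝ (Fin d) → ℝ) (hω_nonneg : ∀ x, 0 ≤ ω x)
    (b : EuclideanSpace ℝ (Fin d) → EuclideanSpace ℝ (Fin d)) :
    LipschitzWith K (fun x => ‖g x‖) ∧
    (∀ᵐ x, DifferentiableAt ℝ g x) ∧
    (∀ᵐ x, DifferentiableAt ℝ (fun y => ‖g y‖) x) ∧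
    (∀ᵐ x, |fderiv ℝ (fun y => ‖g y‖) x (b x)| ≤ ‖fderiv ℝ g x (b x)‖) ∧
    (∫⁻ x, ENNReal.ofReal (ω x * |fderiv ℝ (fun y => ‖g y‖) x (b x)| ^ 2)
      ≤ ∫⁻ x, ENNReal.ofReal (ω x * ‖fderiv ℝ g x (b x)‖ ^ 2)) := by
  have hnorm : LipschitzWith K (fun x => ‖g x‖) := by
    simpa [Function.comp_def] using lipschitzWith_one_norm.comp hg
  have hdiff : ∀ᵐ x, DifferentiableAt ℝ g x := hg.ae_differentiableAt
  have hdiff_norm : ∀ᵐ x, DifferentiableAt ℝ (fun y => ‖g y‖) x := hnorm.ae_differentiableAt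
  have hderiv : ∀ᵐ x, |fderiv ℝ (fun y => ‖g y‖) x (b x)| ≤ ‖fderiv ℝ g x (b x)‖ := by
    filter_upwards [hdiff, hdiff_norm] with x hx hx_norm
    exact abs_fderiv_norm_apply_le hx hx_norm (b x)
  refine ⟨hnorm, hdiff, hdiff_norm, hderiv, lintegral_mono_ae ?_⟩
  filter_upwards [hderiv] with x hx
  gcongr
  exact hω_nonneg x

theorem stmt8 {d : ℕ} (hd : 1 ≤ d)
    (K : NNReal) (g : EuclideanSpace ℝ (Fin d) → ℂ) (hg : LipschitzWith K g)
    (ω : EuclideanSpace ℝ (Fin d) → ℝ) (hω_nonneg : ∀ x, 0 ≤ ω x) (hω_meas : Measurable ω)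
    (b : EuclideanSpace ℝ (Fin d) → EuclideanSpace ℝ (Fin d)) (hb_meas : Measurable b) :
    LipschitzWith K (fun x => ‖g x‖) ∧
    (∀ᵐ x, DifferentiableAt ℝ g x) ∧
    (∀ᵐ x, DifferentiableAt ℝ (fun y => ‖g y‖) x) ∧
    (∀ᵐ x, |fderiv ℝ (fun y => ‖g y‖) x (b x)| ≤ ‖fderiv ℝ g x (b x)‖) ∧
    (∫⁻ x, ENNReal.ofReal (ω x * |fderiv ℝ (fun y => ‖g y‖) x (b x)| ^ 2)
      ≤ ∫⁻ x, ENNReal.ofReal (ω x * ‖fderiv ℝ g x (b x)‖ ^ 2)) :=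
  stmt8_general K g hg ω hω_nonneg b
end
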